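/- Let G be a non-bipartite graph and let H_G be the 3-uniform hypergraph obtained from G by adding a new vertex v and taking as edges all triples e \cup {v} for edges e of G. Then there is an absolute constant c' > 0 such that r(H_G, K_n^{(3)}) \ge 2^{c'n}: if there exists a tournament on N vertices with no transitive subtournament of order n, then the coloring of triples of [N] (red iff the triple is a cyclic triangle) contains no red copy of H_G and no blue set of size n. -/

import Mathlib

/-- A tournament on `Fin N`: `r i j = true` means the edge is directed from `i` to `j`. -/
def IsTournament {N : ℕ} (r : Fin N → Fin N → Bool) : Prop :=
  (∀ i, r i i = false) ∧ ∀ i j : Fin N, i ≠ j → r i j = !r j i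

/-- Three vertices form a cyclic (directed) triangle in the tournament `r`. -/
def CyclicTriple {N : ℕ} (r : Fin N → Fin N → Bool) (a b c : Fin N) : Prop :=
  (r a b = true ∧ r b c = true ∧ r c a = true) ∨
  (r a c = true ∧ r c b = true ∧ r b a = true)

/-- `N` is Ramsey for `(H_G, Kₙ⁽³⁾)`, where `H_G` is the 3-uniform hypergraph obtained from
the graph `G` by adding a new vertex `v` (here `Option.none`) and taking as edges all triples
`e ∪ {v}` for edges `e` of `G`: every red-blue coloring of the triples of `{0, …, N-1}`
contains a red copy of `H_G` or a blue set of size `n`. -/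
def HasRamseyHG (V : Type) (G : SimpleGraph V) (N n : ℕ) : Prop :=
  ∀ C : Finset ℕ → Bool,
    (∃ f : Option V → ℕ, Function.Injective f ∧ (∀ x, f x ∈ Finset.range N) ∧
      ∀ a b : V, G.Adj a b → C {f none, f (some a), f (some b)} = true) ∨
    (∃ T : Finset ℕ, T ⊆ Finset.range N ∧ T.card = n ∧
      ∀ e ⊆ T, e.card = 3 → C e = false)

/-- The Ramsey number `r(H_G, Kₙ⁽³⁾)`. -/
noncomputable def rHG (V : Type) (G : SimpleGraph V) (n : ℕ) : ℕ :=
  sInf {N : ℕ | HasRamseyHG V G N n}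

/-!
Colour a triple red iff it is a cyclic triangle of a tournament `r`. In a red copy of `H_G` with
apex `v`, the direction of the edge between `v` and each other vertex properly 2-colours `G`, so
there is none when `G` is not bipartite; a blue `n`-set is a transitive subtournament of order
`n`. An injective `g : Fin n → Fin N` is increasing for at most a `2^(-n.choose 2)` fraction of all
tournaments on `Fin N`, so if `N ^ n < 2 ^ n.choose 2`, which holds for `N < 2^(n/4)`, some
tournament has no transitive subtournament of order `n`. Finiteness of `r(H_G, K_n^{(3)})` is the
hypergraph Ramsey theorem, proved by the Erdős–Rado induction.
-/

open Finset

namespace IsTournament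

variable {N : ℕ} {r : Fin N → Fin N → Bool}

theorem ne_of_eq_true (ht : IsTournament r) {i j : Fin N} (h : r i j = true) : i ≠ j := by
  rintro rfl
  simp [ht.1] at h

theorem eq_false_of_eq_true (ht : IsTournament r) {i j : Fin N} (h : r i j = true) :
    r j i = false := by
  rw [ht.2 j i (ht.ne_of_eq_true h).symm, h, Bool.not_true]

theorem eq_true_or_eq_true (ht : IsTournament r) {i j : Fin N} (hij : i ≠ j) :
    r i j = true ∨ r j i = true := by
  rw [ht.2 i j hij]
  cases r j i <;> simp

theorem colorable_two_of_cyclicTriple {V : Type*} {G : SimpleGraph V} (ht : IsTournament r)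
    (v : Fin N) (u : V → Fin N) (h : ∀ a b, G.Adj a b → CyclicTriple r v (u a) (u b)) :
    G.Colorable 2 := by
  let c : G.Coloring Bool := SimpleGraph.Coloring.mk (fun a => r v (u a)) fun {a b} hab => by
    rcases h a b hab with ⟨hva, -, hbv⟩ | ⟨hvb, -, hav⟩
    · rw [hva, ht.eq_false_of_eq_true hbv]; decide
    · rw [hvb, ht.eq_false_of_eq_true hav]; decide
  simpa using c.colorable

end IsTournament

namespace CyclicTriple

variable {N : ℕ} {r : Fin N → Fin N → Bool}

theorem of_mem {a b c x y z : Fin N} (h : CyclicTriple r a b c)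
    (hx : x ∈ ({a, b, c} : Finset (Fin N))) (hy : y ∈ ({a, b, c} : Finset (Fin N)))
    (hz : z ∈ ({a, b, c} : Finset (Fin N))) (hxy : x ≠ y) (hxz : x ≠ z) (hyz : y ≠ z) :
    CyclicTriple r x y z := by
  simp only [mem_insert, mem_singleton] at hx hy hz
  unfold CyclicTriple at *
  rcases hx with rfl | rfl | rfl <;> rcases hy with rfl | rfl | rfl <;>
    rcases hz with rfl | rfl | rfl <;> tauto

end CyclicTriple

section Transitive

variable {N : ℕ} {r : Fin N → Fin N → Bool}

theorem IsTournament.trans_of_forall_not_cyclicTriple (ht : IsTournament r) {T : Finset (Fin N)}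
    (hT : ∀ a ∈ T, ∀ b ∈ T, ∀ c ∈ T, a ≠ b → a ≠ c → b ≠ c → ¬ CyclicTriple r a b c) :
    ∀ a ∈ T, ∀ b ∈ T, ∀ c ∈ T, r a b = true → r b c = true → r a c = true := by
  intro a ha b hb c hc hab hbc
  have hac : a ≠ c := by
    rintro rfl
    simp [ht.eq_false_of_eq_true hab] at hbc
  by_contra hac'
  refine hT a ha b hb c hc (ht.ne_of_eq_true hab) hac (ht.ne_of_eq_true hbc) (Or.inl ⟨hab, hbc, ?_⟩)
  exact (ht.eq_true_or_eq_true hac).resolve_left hac'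

/-- In a transitive subtournament the number of in-neighbours strictly increases along edges,
so it enumerates the vertices in order. -/
theorem IsTournament.exists_transitive_of_trans (ht : IsTournament r) (T : Finset (Fin N))
    (htrans : ∀ a ∈ T, ∀ b ∈ T, ∀ c ∈ T, r a b = true → r b c = true → r a c = true) :
    ∃ g : Fin T.card → Fin N, Function.Injective g ∧
      ∀ i j : Fin T.card, i < j → r (g i) (g j) = true := by
  let score (x : Fin N) : ℕ := #{y ∈ T | r y x = true}
  have score_lt : ∀ x ∈ T, ∀ y ∈ T, r x y = true → score x < score y := by
    intro x hx y hy hxy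
    refine card_lt_card (ssubset_iff_of_subset ?_ |>.2 ⟨x, ?_, ?_⟩)
    · intro z hz
      simp only [mem_filter] at hz ⊢
      exact ⟨hz.1, htrans z hz.1 x hx y hy hz.2 hxy⟩
    · simpa [hx] using hxy
    · simp [ht.1 x]
  have score_lt_card : ∀ x ∈ T, score x < #T :=
    fun x hx => card_lt_card (filter_ssubset.2 ⟨x, hx, by simp [ht.1 x]⟩)
  have score_injOn : Set.InjOn score T := by
    intro x hx y hy hxy
    by_contra hne
    rcases ht.eq_true_or_eq_true hne with h | h
    · exact (score_lt x hx y hy h).ne hxy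
    · exact (score_lt y hy x hx h).ne hxy.symm
  have himage : T.image score = range #T :=
    eq_of_subset_of_card_le (fun k hk => by
      obtain ⟨x, hx, rfl⟩ := mem_image.1 hk
      exact mem_range.2 (score_lt_card x hx))
      (by rw [card_range, card_image_of_injOn score_injOn])
  have hsurj : ∀ i : Fin #T, ∃ x ∈ T, score x = i := fun i =>
    mem_image.1 (himage ▸ mem_range.2 i.2)
  choose g hgT hg using hsurj
  refine ⟨g, fun i j hij => Fin.ext (by rw [← hg i, ← hg j, hij]), fun i j hij => ?_⟩
  have hne : g i ≠ g j := fun h => hij.ne (Fin.ext (by rw [← hg i, ← hg j, h]))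
  refine (ht.eq_true_or_eq_true hne).resolve_right fun h => ?_
  have := score_lt _ (hgT j) _ (hgT i) h
  rw [hg, hg] at this
  exact absurd hij (not_lt.2 this.le)

end Transitive

section HypergraphRamsey

variable {α : Type*} [DecidableEq α]

def IsMonochromatic (k : ℕ) (C : Finset α → Bool) (c : Bool) (A : Finset α) : Prop :=
  ∀ e ⊆ A, #e = k → C e = c

def IsRamsey (α : Type*) [DecidableEq α] (k R : ℕ) (s : Bool → ℕ) : Prop :=
  ∀ S : Finset α, R ≤ #S → ∀ C : Finset α → Bool,
    ∃ c, ∃ A ⊆ S, #A = s c ∧ IsMonochromatic k C c A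

theorem IsMonochromatic.insert {k : ℕ} {C : Finset α → Bool} {c : Bool} {A : Finset α} {v : α}
    (hA : IsMonochromatic (k + 1) C c A)
    (hlink : IsMonochromatic k (fun e => C (insert v e)) c A) :
    IsMonochromatic (k + 1) C c (insert v A) := by
  intro e he hek
  by_cases hve : v ∈ e
  · rw [← insert_erase hve]
    exact hlink _ (subset_insert_iff.1 he) (by rw [card_erase_of_mem hve, hek]; rfl)
  · exact hA e ((subset_insert_iff_of_notMem hve).1 he) hek

theorem isRamsey_zero (s : Bool → ℕ) : IsRamsey α 0 (s true + s false) s := by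
  intro S hS C
  have hS' : s (C ∅) ≤ #S := by cases C ∅ <;> omega
  obtain ⟨A, hAS, hA⟩ := exists_subset_card_eq hS'
  refine ⟨C ∅, A, hAS, hA, fun e _ he => by rw [card_eq_zero.1 he]⟩

theorem isRamsey_of_lt {k : ℕ} {s : Bool → ℕ} {c : Bool} (hc : s c < k) :
    IsRamsey α k (s c) s := by
  intro S hS C
  obtain ⟨A, hAS, hA⟩ := exists_subset_card_eq hS
  exact ⟨c, A, hAS, hA, fun e he hek => absurd (card_le_card he) (by omega)⟩

/-- The Erdős–Rado step: colour the `k`-sets `e` of `S \ {v}` by the colour of `insert v e`. -/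
theorem IsRamsey.succ {k R : ℕ} {s R' : Bool → ℕ} (hs : ∀ c, 0 < s c)
    (hR : IsRamsey α k R R')
    (hR' : ∀ c, IsRamsey α (k + 1) (R' c) (Function.update s c (s c - 1))) :
    IsRamsey α (k + 1) (R + 1) s := by
  intro S hS C
  obtain ⟨v, hv⟩ := card_pos.1 (by omega : 0 < #S)
  obtain ⟨c, U, hUS, hU, hUmono⟩ :=
    hR (S.erase v) (by rw [card_erase_of_mem hv]; omega) fun e => C (insert v e)
  obtain ⟨c', A, hAU, hA, hAmono⟩ := hR' c U hU.ge C
  by_cases hcc' : c' = c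
  · subst hcc'
    have hvA : v ∉ A := fun h => notMem_erase v S (hUS (hAU h))
    refine ⟨c', insert v A, insert_subset hv ((hAU.trans hUS).trans (S.erase_subset v)),
      ?_, hAmono.insert fun e he => hUmono e (he.trans hAU)⟩
    rw [card_insert_of_notMem hvA, hA, Function.update_self]
    have := hs c'
    omega
  · exact ⟨c', A, (hAU.trans hUS).trans (S.erase_subset v), by
      rw [hA, Function.update_of_ne hcc'], hAmono⟩

theorem exists_isRamsey (k : ℕ) (s : Bool → ℕ) : ∃ R, IsRamsey α k R s := by
  induction k generalizing s with
  | zero => exact ⟨_, isRamsey_zero s⟩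
  | succ k ih =>
    induction hm : s true + s false using Nat.strong_induction_on generalizing s with
    | _ m ihm =>
      by_cases hsmall : ∃ c, s c < k + 1
      · obtain ⟨c, hc⟩ := hsmall
        exact ⟨_, isRamsey_of_lt hc⟩
      simp only [not_exists, not_lt] at hsmall
      have hR' : ∀ c, ∃ R, IsRamsey α (k + 1) R (Function.update s c (s c - 1)) := by
        intro c
        refine ihm _ ?_ _ rfl
        have := hsmall c
        cases c <;> simp only [Function.update_self, ne_eq, Bool.false_eq_true, Bool.true_eq_false,
          not_false_eq_true, Function.update_of_ne] <;> omega
      choose R' hR' using hR'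
      obtain ⟨R, hR⟩ := ih R'
      exact ⟨R + 1, hR.succ (fun c => by have := hsmall c; omega) hR'⟩

end HypergraphRamsey

theorem card_mul_two_pow_le_of_injOn {β : Type*} [Fintype β] [DecidableEq β] (s : Finset β)
    (B : Finset (β → Bool)) (hB : Set.InjOn (fun (d : β → Bool) (b : ↥sᶜ) => d b) B) :
    #B * 2 ^ #s ≤ 2 ^ Fintype.card β := by
  have hcard : #B ≤ 2 ^ (Fintype.card β - #s) := by
    simpa using card_le_card_of_injOn _ (fun _ _ => mem_univ _) hB
  calc #B * 2 ^ #s ≤ 2 ^ (Fintype.card β - #s) * 2 ^ #s := Nat.mul_le_mul_right _ hcard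
    _ = 2 ^ Fintype.card β := by rw [← pow_add, Nat.sub_add_cancel (card_le_univ s)]

section RandomTournament

variable {N : ℕ}

def tournamentOf (d : Sym2 (Fin N) → Bool) (i j : Fin N) : Bool :=
  decide (i < j) && d s(i, j) || decide (j < i) && !d s(i, j)

theorem isTournament_tournamentOf (d : Sym2 (Fin N) → Bool) : IsTournament (tournamentOf d) := by
  refine ⟨fun i => by simp [tournamentOf], fun i j hij => ?_⟩
  rcases hij.lt_or_gt with h | h <;> simp [tournamentOf, h, h.not_gt, Sym2.eq_swap]

theorem apply_eq_of_tournamentOf_eq {d d' : Sym2 (Fin N) → Bool} {i j : Fin N} (hij : i ≠ j)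
    (h : tournamentOf d i j = tournamentOf d' i j) : d s(i, j) = d' s(i, j) := by
  rcases hij.lt_or_gt with h' | h' <;> simpa [tournamentOf, h', h'.not_gt] using h

def transitiveOrientations {n : ℕ} (g : Fin n → Fin N) : Finset (Sym2 (Fin N) → Bool) :=
  {d | ∀ i j, i < j → tournamentOf d (g i) (g j) = true}

/-- An injective `g` fixes the orientation of the `n.choose 2` pairs `s(g i, g j)`. -/
theorem card_transitiveOrientations_mul_le {n : ℕ} {g : Fin n → Fin N}
    (hg : Function.Injective g) :
    #(transitiveOrientations g) * 2 ^ n.choose 2 ≤ 2 ^ Fintype.card (Sym2 (Fin N)) := by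
  let pairs : Finset (Sym2 (Fin N)) :=
    ((univ : Finset (Fin n)).offDiag.image Sym2.mk.uncurry).map (⟨g, hg⟩ : Fin n ↪ Fin N).sym2Map
  have hpairs : #pairs = n.choose 2 := by
    rw [card_map, Sym2.card_image_offDiag, card_univ, Fintype.card_fin]
  rw [← hpairs]
  refine card_mul_two_pow_le_of_injOn pairs _ fun d hd d' hd' hdd' => funext fun z => ?_
  by_cases hz : z ∈ pairs
  · obtain ⟨i, j, hij, rfl⟩ : ∃ i j, i < j ∧ z = s(g i, g j) := by
      simp only [pairs, mem_map, mem_image, mem_offDiag] at hz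
      obtain ⟨_, ⟨⟨i, j⟩, ⟨-, -, hij⟩, rfl⟩, rfl⟩ := hz
      rcases Ne.lt_or_gt hij with h | h
      · exact ⟨i, j, h, rfl⟩
      · exact ⟨j, i, h, Sym2.eq_swap⟩
    simp only [transitiveOrientations, coe_filter, mem_univ, true_and] at hd hd'
    exact apply_eq_of_tournamentOf_eq (hg.ne hij.ne) ((hd i j hij).trans (hd' i j hij).symm)
  · exact congrFun hdd' ⟨z, mem_compl.2 hz⟩

theorem exists_tournament_not_transitive {n : ℕ} (h : N ^ n < 2 ^ n.choose 2) :
    ∃ r : Fin N → Fin N → Bool, IsTournament r ∧ ¬ ∃ g : Fin n → Fin N,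
      Function.Injective g ∧ ∀ i j : Fin n, i < j → r (g i) (g j) = true := by
  by_contra! hall
  set M := Fintype.card (Sym2 (Fin N))
  let I : Finset (Fin n → Fin N) := {g | Function.Injective g}
  have hcover : (univ : Finset (Sym2 (Fin N) → Bool)) ⊆ I.biUnion transitiveOrientations := by
    intro d _
    obtain ⟨g, hg, hgd⟩ := hall _ (isTournament_tournamentOf d)
    simpa [I, transitiveOrientations] using ⟨g, hg, hgd⟩
  have hI : #I ≤ N ^ n := by
    simpa using card_filter_le (univ : Finset (Fin n → Fin N)) Function.Injective
  have : 2 ^ M * 2 ^ n.choose 2 < 2 ^ M * 2 ^ n.choose 2 :=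
    calc 2 ^ M * 2 ^ n.choose 2
        ≤ #(I.biUnion transitiveOrientations) * 2 ^ n.choose 2 := by
          gcongr
          simpa [M] using card_le_card hcover
      _ ≤ ∑ g ∈ I, #(transitiveOrientations g) * 2 ^ n.choose 2 := by
          rw [← sum_mul]
          gcongr
          exact card_biUnion_le
      _ ≤ ∑ g ∈ I, 2 ^ M :=
          sum_le_sum fun g hg => card_transitiveOrientations_mul_le (by simpa [I] using hg)
      _ ≤ N ^ n * 2 ^ M := by
          rw [sum_const, smul_eq_mul]
          gcongr
      _ < 2 ^ M * 2 ^ n.choose 2 := by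
          rw [mul_comm]
          gcongr
  exact lt_irrefl _ this

end RandomTournament

open Classical in
noncomputable def cyclicColoring {N : ℕ} (r : Fin N → Fin N → Bool) (e : Finset ℕ) : Bool :=
  decide (∃ a b c : Fin N, CyclicTriple r a b c ∧ e = {(a : ℕ), (b : ℕ), (c : ℕ)})

theorem cyclicColoring_eq_true_iff {N : ℕ} {r : Fin N → Fin N → Bool} {a b c : Fin N}
    (hab : a ≠ b) (hac : a ≠ c) (hbc : b ≠ c) :
    cyclicColoring r {(a : ℕ), (b : ℕ), (c : ℕ)} = true ↔ CyclicTriple r a b c := by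
  refine ⟨fun h => ?_, fun h => by simpa [cyclicColoring] using ⟨a, b, c, h, rfl⟩⟩
  simp only [cyclicColoring, decide_eq_true_eq] at h
  obtain ⟨x, y, z, hxyz, he⟩ := h
  have hmem : ∀ w : Fin N, (w : ℕ) ∈ ({(a : ℕ), (b : ℕ), (c : ℕ)} : Finset ℕ) →
      w ∈ ({x, y, z} : Finset (Fin N)) := by
    intro w hw
    rw [he] at hw
    simpa [Fin.val_inj] using hw
  exact hxyz.of_mem (hmem a (by simp)) (hmem b (by simp)) (hmem c (by simp)) hab hac hbc

theorem exists_hasRamseyHG (V : Type) [Fintype V] (G : SimpleGraph V) (n : ℕ) :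
    ∃ N, HasRamseyHG V G N n := by
  obtain ⟨R, hR⟩ := exists_isRamsey (α := ℕ) 3 fun c => cond c (Fintype.card V + 1) n
  refine ⟨R, fun C => ?_⟩
  obtain ⟨c, A, hAR, hA, hmono⟩ := hR (range R) (by simp) C
  cases c
  · exact Or.inr ⟨A, hAR, hA, hmono⟩
  obtain ⟨f⟩ : Nonempty (Option V ↪ A) := Function.Embedding.nonempty_of_card_le (by simp [hA])
  have hf : Function.Injective fun x => (f x : ℕ) := fun x y h => f.injective (Subtype.ext h)
  refine Or.inl ⟨fun x => f x, hf, fun x => hAR (f x).2, fun a b hab => hmono _ ?_ ?_⟩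
  · simp only [insert_subset_iff, singleton_subset_iff, coe_mem, and_self]
  · exact card_eq_three.2 ⟨_, _, _, hf.ne (by simp), hf.ne (by simp),
      hf.ne (by simpa using hab.ne), rfl⟩

theorem not_hasRamseyHG {V : Type} {G : SimpleGraph V} (hG : ¬ G.Colorable 2) {N n : ℕ}
    {r : Fin N → Fin N → Bool} (ht : IsTournament r)
    (hr : ¬ ∃ g : Fin n → Fin N, Function.Injective g ∧
      ∀ i j : Fin n, i < j → r (g i) (g j) = true) :
    ¬ HasRamseyHG V G N n := by
  intro hR
  rcases hR (cyclicColoring r) with ⟨f, hf, hfN, hred⟩ | ⟨T, hTN, hT, hblue⟩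
  · let f' : Option V → Fin N := fun x => ⟨f x, mem_range.1 (hfN x)⟩
    have hf' : Function.Injective f' := fun x y h => hf (congrArg Fin.val h)
    refine hG (ht.colorable_two_of_cyclicTriple (f' none) (f' ∘ some) fun a b hab => ?_)
    exact (cyclicColoring_eq_true_iff (hf'.ne (by simp)) (hf'.ne (by simp))
      (hf'.ne (by simpa using hab.ne))).1 (hred a b hab)
  · have hTN' : ∀ m ∈ T, m < N := fun m hm => mem_range.1 (hTN hm)
    have hT' : ∀ a ∈ T.attachFin hTN', ∀ b ∈ T.attachFin hTN', ∀ c ∈ T.attachFin hTN',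
        a ≠ b → a ≠ c → b ≠ c → ¬ CyclicTriple r a b c := by
      intro a ha b hb c hc hab hac hbc hcyc
      have hblue' := hblue {(a : ℕ), (b : ℕ), (c : ℕ)} (by simp_all [insert_subset_iff])
        (card_eq_three.2 ⟨_, _, _, Fin.val_ne_of_ne hab, Fin.val_ne_of_ne hac,
          Fin.val_ne_of_ne hbc, rfl⟩)
      rw [(cyclicColoring_eq_true_iff hab hac hbc).2 hcyc] at hblue'
      exact nomatch hblue'
    have := ht.exists_transitive_of_trans _ (ht.trans_of_forall_not_cyclicTriple hT')
    rw [card_attachFin, hT] at this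
    exact hr this

theorem pow_lt_two_pow_choose_two {N n : ℕ} (hn : 2 ≤ n) (hN : (N : ℝ) < 2 ^ ((1 / 4 : ℝ) * n)) :
    N ^ n < 2 ^ n.choose 2 := by
  have hexp : (1 / 4 : ℝ) * n * n ≤ n.choose 2 := by
    rw [Nat.cast_choose_two]
    have : (2 : ℝ) ≤ n := by exact_mod_cast hn
    nlinarith
  have : (N : ℝ) ^ n < 2 ^ n.choose 2 :=
    calc (N : ℝ) ^ n < (2 ^ ((1 / 4 : ℝ) * n)) ^ n := pow_lt_pow_left₀ hN (by positivity) (by omega)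
      _ = 2 ^ ((1 / 4 : ℝ) * n * n) := by rw [← Real.rpow_natCast, ← Real.rpow_mul (by norm_num)]
      _ ≤ 2 ^ (n.choose 2 : ℝ) := Real.rpow_le_rpow_of_exponent_le one_le_two hexp
      _ = 2 ^ n.choose 2 := Real.rpow_natCast _ _
  exact_mod_cast this

/-- For every non-bipartite graph `G` there is an absolute constant `c' > 0` such that
`r(H_G, Kₙ⁽³⁾) ≥ 2^{c'n}`; moreover, if there is a tournament on `N` vertices with no
transitive subtournament of order `n`, then the coloring of the triples of its vertex set in
which a triple is red iff it is a cyclic triangle contains no red copy of `H_G` and no blue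
set of size `n`. -/
theorem rHG_lower :
    ∃ c' : ℝ, 0 < c' ∧
      ∀ (V : Type) [Fintype V] (G : SimpleGraph V), ¬ G.Colorable 2 →
        (∀ n : ℕ, 2 ≤ n → (2 : ℝ) ^ (c' * n) ≤ (rHG V G n : ℝ)) ∧
        (∀ n N : ℕ, ∀ r : Fin N → Fin N → Bool, IsTournament r →
          (¬ ∃ g : Fin n → Fin N, Function.Injective g ∧
            ∀ i j : Fin n, i < j → r (g i) (g j) = true) →
          (¬ ∃ f : Option V → Fin N, Function.Injective f ∧
            ∀ a b : V, G.Adj a b → CyclicTriple r (f none) (f (some a)) (f (some b))) ∧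
          (¬ ∃ T : Finset (Fin N), T.card = n ∧ ∀ a ∈ T, ∀ b ∈ T, ∀ c ∈ T,
            a ≠ b → a ≠ c → b ≠ c → ¬ CyclicTriple r a b c)) := by
  refine ⟨1 / 4, by norm_num, fun V _ G hG => ⟨fun n hn => ?_, fun n N r ht hr => ⟨?_, ?_⟩⟩⟩
  · by_contra! hlt
    obtain ⟨r, ht, hr⟩ := exists_tournament_not_transitive (pow_lt_two_pow_choose_two hn hlt)
    exact not_hasRamseyHG hG ht hr (Nat.sInf_mem (exists_hasRamseyHG V G n))
  · rintro ⟨f, -, hf⟩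
    exact hG (ht.colorable_two_of_cyclicTriple _ _ hf)
  · rintro ⟨T, rfl, hT⟩
    exact hr (ht.exists_transitive_of_trans T (ht.trans_of_forall_not_cyclicTriple hT))
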